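/- The function V⁻(t,x) = x e^{−sσ(T−t)} Φ(d₁⁻) − K e^{−r(T−t)} Φ(d₂⁻), with d₁⁻ = (log(x/K) + (r − sσ + σ²/2)(T−t))/(σ√(T−t)) and d₂⁻ = d₁⁻ − σ√(T−t), solves the nonlinear PDE V_t + r x V_x + (σ²x²/2) V_{xx} − s|σ x V_x| − r V = 0 on (0,T) × (0,∞), and moreover V⁻(t,x) ≤ V⁺(t,x) for all (t,x) ∈ (0,T) × (0,∞), where V⁺ is as in the ask-price formula. -/

import Mathlib

open Real

/-- Standard normal cumulative distribution function. -/
noncomputable def stdNormalCDF (y : ℝ) : ℝ :=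
  ∫ u in Set.Iio y, (2 * π) ^ (-(1 : ℝ) / 2) * Real.exp (-u ^ 2 / 2)

/-- `d₁⁻ = (log(x/K) + (r − sσ + σ²/2)(T − t)) / (σ √(T − t))`. -/
noncomputable def d1m (T K σ r s t x : ℝ) : ℝ :=
  (Real.log (x / K) + (r - s * σ + σ ^ 2 / 2) * (T - t)) / (σ * Real.sqrt (T - t))

/-- `d₁⁺`, defined with `r + sσ` in place of `r − sσ`. -/
noncomputable def d1p (T K σ r s t x : ℝ) : ℝ :=
  (Real.log (x / K) + (r + s * σ + σ ^ 2 / 2) * (T - t)) / (σ * Real.sqrt (T - t))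

/-- The bid-price value function `V⁻(t,x) = x e^{−sσ(T−t)} Φ(d₁⁻) − K e^{−r(T−t)} Φ(d₂⁻)`. -/
noncomputable def Vminus (T K σ r s t x : ℝ) : ℝ :=
  x * Real.exp (-(s * σ) * (T - t)) * stdNormalCDF (d1m T K σ r s t x) -
    K * Real.exp (-r * (T - t)) * stdNormalCDF (d1m T K σ r s t x - σ * Real.sqrt (T - t))

/-- The ask-price value function `V⁺(t,x) = x e^{sσ(T−t)} Φ(d₁⁺) − K e^{−r(T−t)} Φ(d₂⁺)`. -/
noncomputable def Vplus (T K σ r s t x : ℝ) : ℝ :=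
  x * Real.exp (s * σ * (T - t)) * stdNormalCDF (d1p T K σ r s t x) -
    K * Real.exp (-r * (T - t)) * stdNormalCDF (d1p T K σ r s t x - σ * Real.sqrt (T - t))

/-!
`V⁻` and `V⁺` are generalized Black–Scholes call prices `C_b` with cost of carry `b = r ∓ sσ`.
Every such price solves `C_t + b x C_x + σ²x²/2 C_xx - r C = 0`, and its delta
`e^{(b-r)τ} Φ(d₁)` is nonnegative, so for `b = r - sσ` the term `-s |σ x C_x|` is exactly the
change of drift from `r` to `b`. All derivatives are computed through the balance
`x e^{(b-r)τ} φ(d₁) = K e^{-rτ} φ(d₂)` (from `σ√τ d₁ - σ²τ/2 = log (x/K) + bτ`), which cancels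
every term coming from the derivative of `d₁`. In particular `∂_b C_b = τ x e^{(b-r)τ} Φ(d₁) ≥ 0`,
so `C_b` increases with `b` and `V⁻ ≤ V⁺`.
-/

open MeasureTheory Set Filter Topology

lemma hasDerivAt_integral_Iio {f : ℝ → ℝ} (hf : Integrable f) (hc : Continuous f) (y : ℝ) :
    HasDerivAt (fun z => ∫ u in Iio z, f u) (f y) y := by
  have hsplit : ∀ z, ∫ u in Iio z, f u = (∫ u in Iic 0, f u) + ∫ u in (0 : ℝ)..z, f u := by
    intro z
    rw [setIntegral_congr_set Iio_ae_eq_Iic,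
      ← intervalIntegral.integral_Iic_sub_Iic hf.integrableOn hf.integrableOn]
    ring
  simp only [hsplit]
  exact (intervalIntegral.integral_hasDerivAt_right hf.intervalIntegrable
    hc.aestronglyMeasurable.stronglyMeasurableAtFilter hc.continuousAt).const_add _

noncomputable def stdNormalPDF (y : ℝ) : ℝ := (2 * π) ^ (-(1 : ℝ) / 2) * exp (-y ^ 2 / 2)

lemma stdNormalPDF_nonneg (y : ℝ) : 0 ≤ stdNormalPDF y := by
  unfold stdNormalPDF; positivity

lemma integrable_stdNormalPDF : Integrable stdNormalPDF := by
  refine ((integrable_exp_neg_mul_sq (by norm_num : (0 : ℝ) < 1 / 2)).const_mul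
    ((2 * π) ^ (-(1 : ℝ) / 2))).congr (.of_forall fun u => ?_)
  simp only [stdNormalPDF]
  ring_nf

lemma hasDerivAt_stdNormalCDF (y : ℝ) : HasDerivAt stdNormalCDF (stdNormalPDF y) y :=
  hasDerivAt_integral_Iio integrable_stdNormalPDF (by unfold stdNormalPDF; fun_prop) y

lemma stdNormalCDF_nonneg (y : ℝ) : 0 ≤ stdNormalCDF y :=
  setIntegral_nonneg measurableSet_Iio fun u _ => stdNormalPDF_nonneg u

lemma stdNormalPDF_sub (d a : ℝ) :
    stdNormalPDF (d - a) = stdNormalPDF d * exp (a * d - a ^ 2 / 2) := by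
  rw [stdNormalPDF, stdNormalPDF, mul_assoc, ← exp_add]
  ring_nf

lemma HasDerivAt.mul_cdf_sub_mul_cdf {g h d a : ℝ → ℝ} {g' h' d' a' p : ℝ}
    (hg : HasDerivAt g g' p) (hh : HasDerivAt h h' p) (hd : HasDerivAt d d' p)
    (ha : HasDerivAt a a' p)
    (hpdf : g p * stdNormalPDF (d p) = h p * stdNormalPDF (d p - a p)) :
    HasDerivAt (fun q => g q * stdNormalCDF (d q) - h q * stdNormalCDF (d q - a q))
      (g' * stdNormalCDF (d p) - h' * stdNormalCDF (d p - a p) +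
        h p * stdNormalPDF (d p - a p) * a') p := by
  have hΦd := (hasDerivAt_stdNormalCDF (d p)).comp p hd
  have hΦda := (hasDerivAt_stdNormalCDF (d p - a p)).comp p (hd.sub ha)
  refine ((hg.mul hΦd).sub (hh.mul hΦda)).congr_deriv ?_
  simp only [Function.comp_apply]
  linear_combination d' * hpdf

namespace BlackScholes

variable (K σ r b : ℝ)

noncomputable def d1 (τ x : ℝ) : ℝ :=
  (log (x / K) + (b + σ ^ 2 / 2) * τ) / (σ * √τ)

/-- The generalized Black–Scholes price of a European call with interest rate `r` and cost of
carry `b`; `V⁻` and `V⁺` are the cases `b = r ∓ sσ`. -/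
noncomputable def call (τ x : ℝ) : ℝ :=
  x * exp ((b - r) * τ) * stdNormalCDF (d1 K σ b τ x) -
    K * exp (-r * τ) * stdNormalCDF (d1 K σ b τ x - σ * √τ)

variable {K σ b}

lemma sqrt_mul_d1 {τ : ℝ} (hσ : 0 < σ) (hτ : 0 < τ) (x : ℝ) :
    σ * √τ * d1 K σ b τ x - (σ * √τ) ^ 2 / 2 = log (x / K) + b * τ := by
  have hsqrt : 0 < √τ := sqrt_pos.2 hτ
  rw [d1, mul_pow, sq_sqrt hτ.le]
  field_simp
  ring

lemma pdf_d1_balance {τ x : ℝ} (hK : 0 < K) (hσ : 0 < σ) (hτ : 0 < τ) (hx : 0 < x) :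
    x * exp ((b - r) * τ) * stdNormalPDF (d1 K σ b τ x) =
      K * exp (-r * τ) * stdNormalPDF (d1 K σ b τ x - σ * √τ) := by
  rw [stdNormalPDF_sub, sqrt_mul_d1 hσ hτ, exp_add, exp_log (div_pos hx hK)]
  have hexp : exp ((b - r) * τ) = exp (-r * τ) * exp (b * τ) := by rw [← exp_add]; ring_nf
  rw [hexp]
  field_simp

lemma hasDerivAt_d1_spot {τ x : ℝ} (hK : 0 < K) (hσ : 0 < σ) (hτ : 0 < τ) (hx : 0 < x) :
    HasDerivAt (d1 K σ b τ) (x * (σ * √τ))⁻¹ x := by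
  have hsqrt : 0 < √τ := sqrt_pos.2 hτ
  refine (((((hasDerivAt_id' x).div_const K).log (by positivity)).add_const _).div_const
    _).congr_deriv ?_
  field_simp

lemma hasDerivAt_call_spot {τ x : ℝ} (hK : 0 < K) (hσ : 0 < σ) (hτ : 0 < τ) (hx : 0 < x) :
    HasDerivAt (call K σ r b τ) (exp ((b - r) * τ) * stdNormalCDF (d1 K σ b τ x)) x :=
  (((hasDerivAt_id x).mul_const _).mul_cdf_sub_mul_cdf (hasDerivAt_const x _)
    (hasDerivAt_d1_spot hK hσ hτ hx) (hasDerivAt_const x _)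
    (pdf_d1_balance r hK hσ hτ hx)).congr_deriv (by simp)

lemma hasDerivAt_deriv_call_spot {τ x : ℝ} (hK : 0 < K) (hσ : 0 < σ) (hτ : 0 < τ)
    (hx : 0 < x) :
    HasDerivAt (deriv (call K σ r b τ))
      (exp ((b - r) * τ) * (stdNormalPDF (d1 K σ b τ x) * (x * (σ * √τ))⁻¹)) x := by
  have hdelta : deriv (call K σ r b τ) =ᶠ[𝓝 x]
      fun ξ => exp ((b - r) * τ) * stdNormalCDF (d1 K σ b τ ξ) := by
    filter_upwards [Ioi_mem_nhds hx] with ξ hξ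
    exact (hasDerivAt_call_spot r hK hσ hτ hξ).deriv
  exact (((hasDerivAt_stdNormalCDF _).comp x (hasDerivAt_d1_spot hK hσ hτ hx)).const_mul
    _).congr_of_eventuallyEq hdelta

lemma hasDerivAt_call_maturity {τ x : ℝ} (hK : 0 < K) (hσ : 0 < σ) (hτ : 0 < τ) (hx : 0 < x) :
    HasDerivAt (fun τ => call K σ r b τ x)
      ((b - r) * x * exp ((b - r) * τ) * stdNormalCDF (d1 K σ b τ x) +
        r * K * exp (-r * τ) * stdNormalCDF (d1 K σ b τ x - σ * √τ) +
        K * exp (-r * τ) * stdNormalPDF (d1 K σ b τ x - σ * √τ) * (σ / (2 * √τ))) τ := by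
  have hd : DifferentiableAt ℝ (fun τ => d1 K σ b τ x) τ := by
    unfold d1
    fun_prop (disch := positivity)
  refine ((((hasDerivAt_id' τ).const_mul (b - r)).exp.const_mul x).mul_cdf_sub_mul_cdf
    (((hasDerivAt_id' τ).const_mul (-r)).exp.const_mul K) hd.hasDerivAt
    ((hasDerivAt_sqrt hτ.ne').const_mul σ) (pdf_d1_balance r hK hσ hτ hx)).congr_deriv ?_
  ring

lemma hasDerivAt_call_carry {τ x : ℝ} (hK : 0 < K) (hσ : 0 < σ) (hτ : 0 < τ) (hx : 0 < x)
    (b : ℝ) :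
    HasDerivAt (fun b => call K σ r b τ x)
      (τ * x * exp ((b - r) * τ) * stdNormalCDF (d1 K σ b τ x)) b := by
  have hd : DifferentiableAt ℝ (fun b => d1 K σ b τ x) b := by
    unfold d1
    fun_prop
  refine (((((hasDerivAt_id' b).sub_const r).mul_const τ).exp.const_mul x).mul_cdf_sub_mul_cdf
    (hasDerivAt_const b _) hd.hasDerivAt (hasDerivAt_const b _)
    (pdf_d1_balance r hK hσ hτ hx)).congr_deriv ?_
  ring

lemma call_monotone_carry {τ x : ℝ} (hK : 0 < K) (hσ : 0 < σ) (hτ : 0 < τ) (hx : 0 < x) :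
    Monotone fun b => call K σ r b τ x :=
  monotone_of_hasDerivAt_nonneg (hasDerivAt_call_carry r hK hσ hτ hx) fun b => by
    have := stdNormalCDF_nonneg (d1 K σ b τ x)
    positivity

theorem call_pde {T t x : ℝ} (hK : 0 < K) (hσ : 0 < σ) (ht : t < T) (hx : 0 < x) :
    deriv (fun t => call K σ r b (T - t) x) t + b * x * deriv (call K σ r b (T - t)) x +
      σ ^ 2 * x ^ 2 / 2 * deriv (deriv (call K σ r b (T - t))) x -
      r * call K σ r b (T - t) x = 0 := by
  have hτ : 0 < T - t := sub_pos.2 ht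
  have hsqrt : 0 < √(T - t) := sqrt_pos.2 hτ
  have htheta : HasDerivAt (fun t => call K σ r b (T - t) x) _ t :=
    (hasDerivAt_call_maturity r hK hσ hτ hx).comp t ((hasDerivAt_id' t).const_sub T)
  rw [htheta.deriv, (hasDerivAt_call_spot r hK hσ hτ hx).deriv,
    (hasDerivAt_deriv_call_spot r hK hσ hτ hx).deriv, call]
  set E := exp ((b - r) * (T - t))
  set φ₁ := stdNormalPDF (d1 K σ b (T - t) x)
  have hgamma : σ ^ 2 * x ^ 2 / 2 * (E * (φ₁ * (x * (σ * √(T - t)))⁻¹)) =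
      σ / (2 * √(T - t)) * (x * E * φ₁) := by
    field_simp
  linear_combination hgamma + σ / (2 * √(T - t)) * pdf_d1_balance r hK hσ hτ hx

end BlackScholes

lemma Vminus_eq_call (T K σ r s t x : ℝ) :
    Vminus T K σ r s t x = BlackScholes.call K σ r (r - s * σ) (T - t) x := by
  rw [Vminus, BlackScholes.call, sub_sub_cancel_left]
  rfl

lemma Vplus_eq_call (T K σ r s t x : ℝ) :
    Vplus T K σ r s t x = BlackScholes.call K σ r (r + s * σ) (T - t) x := by
  rw [Vplus, BlackScholes.call, add_sub_cancel_left]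
  rfl

open BlackScholes

theorem stmt_12_general (T K σ r s : ℝ) (hK : 0 < K) (hσ : 0 < σ) (hs : 0 ≤ s) :
    ∀ t ∈ Set.Ioo (0 : ℝ) T, ∀ x ∈ Set.Ioi (0 : ℝ),
      (deriv (fun τ => Vminus T K σ r s τ x) t +
        r * x * deriv (fun ξ => Vminus T K σ r s t ξ) x +
        σ ^ 2 * x ^ 2 / 2 * deriv (deriv (fun ξ => Vminus T K σ r s t ξ)) x -
        s * |σ * x * deriv (fun ξ => Vminus T K σ r s t ξ) x| -
        r * Vminus T K σ r s t x = 0) ∧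
      Vminus T K σ r s t x ≤ Vplus T K σ r s t x := by
  rintro t ⟨-, htT⟩ x (hx : 0 < x)
  have hτ : 0 < T - t := sub_pos.2 htT
  simp only [Vminus_eq_call, Vplus_eq_call]
  refine ⟨?_, call_monotone_carry r hK hσ hτ hx (by nlinarith)⟩
  have hdelta := (hasDerivAt_call_spot r hK hσ hτ hx (b := r - s * σ)).deriv
  have hdelta_nonneg : 0 ≤ σ * x * deriv (call K σ r (r - s * σ) (T - t)) x := by
    have := stdNormalCDF_nonneg (d1 K σ (r - s * σ) (T - t) x)
    rw [hdelta]
    positivity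
  rw [abs_of_nonneg hdelta_nonneg]
  linear_combination call_pde r hK hσ htT hx (b := r - s * σ)

/-- `V⁻` solves the bid-price PDE
`V_t + r x V_x + (σ² x²/2) V_xx − s |σ x V_x| − r V = 0` on `(0,T) × (0,∞)`,
and `V⁻ ≤ V⁺` there. -/
theorem stmt_12 (T K σ r s : ℝ) (hT : 0 < T) (hK : 0 < K) (hσ : 0 < σ) (hs : 0 ≤ s) :
    ∀ t ∈ Set.Ioo (0 : ℝ) T, ∀ x ∈ Set.Ioi (0 : ℝ),
      (deriv (fun τ => Vminus T K σ r s τ x) t +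
        r * x * deriv (fun ξ => Vminus T K σ r s t ξ) x +
        σ ^ 2 * x ^ 2 / 2 * deriv (deriv (fun ξ => Vminus T K σ r s t ξ)) x -
        s * |σ * x * deriv (fun ξ => Vminus T K σ r s t ξ) x| -
        r * Vminus T K σ r s t x = 0) ∧
      Vminus T K σ r s t x ≤ Vplus T K σ r s t x :=
  stmt_12_general T K σ r s hK hσ hs
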